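/- (Completeness of the tableau system) Let A be a sentence of FOLP. If A is FOLP_CS-valid, i.e., A is true in every Mkrtychev model of FOLP_CS, then A has an FOLP_CS-tableau proof. -/
import Mathlib


open scoped Classical

/-- Justification terms of FOLP, built from justification variables `jvar i`,
justification constants `jconst i`, and the operations `+`, `·`, `!`, `genₓ`. -/
inductive Tm : Type
  | jvar : ℕ → Tm
  | jconst : ℕ → Tm
  | plus : Tm → Tm → Tm
  | app : Tm → Tm → Tm
  | bang : Tm → Tm
  | gen : ℕ → Tm → Tm
  deriving DecidableEq

/-- FOLP formulas with extra individual constants from `K` (`K`-formulas).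
Individual variables are natural numbers; an argument `Sum.inl x` is an individual
variable, `Sum.inr a` is an element of `K`.  Predicate symbols are indexed by `ℕ`.
Plain FOLP formulas are `Fm Empty`, Par-formulas are `Fm ℕ` (the parameters being a
separate copy of ℕ, namely the `Sum.inr` part), and `D`-formulas are `Fm D`.
`just t X A` is the justification assertion `t :_X A`. -/
inductive Fm (K : Type) : Type
  | pred : ℕ → List (ℕ ⊕ K) → Fm K
  | neg : Fm K → Fm K
  | imp : Fm K → Fm K → Fm K
  | all : ℕ → Fm K → Fm K
  | ex : ℕ → Fm K → Fm K
  | just : Tm → Finset (ℕ ⊕ K) → Fm K → Fm K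

namespace Fm

variable {K K' : Type}

/-- Free individual variables of a `K`-formula.  Recall that
`FVar (t :_X A) = X` (more precisely, the individual-variable part of `X`). -/
noncomputable def fvar : Fm K → Finset ℕ
  | pred _ args => (args.filterMap Sum.getLeft?).toFinset
  | neg A => A.fvar
  | imp A B => A.fvar ∪ B.fvar
  | all x A => A.fvar.erase x
  | ex x A => A.fvar.erase x
  | just _ X _ => (X.toList.filterMap Sum.getLeft?).toFinset

/-- The elements of `K` occurring in a `K`-formula (for `K = Par` this is `Par(A)`,
for `K = D` this is `D(A)`). -/
noncomputable def kocc : Fm K → Finset K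
  | pred _ args => (args.filterMap Sum.getRight?).toFinset
  | neg A => A.kocc
  | imp A B => A.kocc ∪ B.kocc
  | all _ A => A.kocc
  | ex _ A => A.kocc
  | just _ X A => A.kocc ∪ (X.toList.filterMap Sum.getRight?).toFinset

/-- A `K`-formula is closed if it contains no free occurrences of individual variables. -/
def Closed (A : Fm K) : Prop := A.fvar = ∅

/-- Action of a partial substitution (of elements of `K` for individual variables)
on variables/`K`-elements. -/
def subK (σ : ℕ → Option K) : ℕ ⊕ K → ℕ ⊕ K
  | .inl x => (σ x).elim (.inl x) .inr
  | .inr a => .inr a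

/-- Simultaneous substitution of elements of `K` for free individual variables.
In `t :_X A` only the variables belonging to `X` are free, so only those get
substituted (both inside `X` and inside `A`). -/
noncomputable def msubst (σ : ℕ → Option K) : Fm K → Fm K
  | pred Q args => pred Q (args.map (subK σ))
  | neg A => neg (A.msubst σ)
  | imp A B => imp (A.msubst σ) (B.msubst σ)
  | all x A => all x (A.msubst fun y => if y = x then none else σ y)
  | ex x A => ex x (A.msubst fun y => if y = x then none else σ y)
  | just t X A =>
      just t (X.image (subK σ)) (A.msubst fun y => if Sum.inl y ∈ X then σ y else none)

/-- `A.subst1 x a` is `A(a)`, i.e. `A{x/a}`: the result of replacing all free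
occurrences of the individual variable `x` by the element `a : K`. -/
noncomputable def subst1 (x : ℕ) (a : K) (A : Fm K) : Fm K :=
  A.msubst fun y => if y = x then some a else none

/-- Action of a variable-for-variable substitution on arguments. -/
def subVV (x y : ℕ) : ℕ ⊕ K → ℕ ⊕ K
  | .inl z => if z = x then .inl y else .inl z
  | .inr a => .inr a

/-- `A.vsubst x y` is `A{x/y}`: substitution of the individual variable `y` for
the free occurrences of the individual variable `x`. -/
noncomputable def vsubst (x y : ℕ) : Fm K → Fm K
  | pred Q args => pred Q (args.map (subVV x y))
  | neg A => neg (A.vsubst x y)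
  | imp A B => imp (A.vsubst x y) (B.vsubst x y)
  | all z A => if z = x then all z A else all z (A.vsubst x y)
  | ex z A => if z = x then ex z A else ex z (A.vsubst x y)
  | just t X A =>
      if Sum.inl x ∈ X then just t (X.image (subVV x y)) (A.vsubst x y) else just t X A

/-- `FreeFor y x A`: the variable `y` is substitutable for the variable `x` in `A`
(no free occurrence of `x` lies in the scope of a quantifier binding `y`). -/
def FreeFor (y x : ℕ) : Fm K → Prop
  | pred _ _ => True
  | neg A => FreeFor y x A
  | imp A B => FreeFor y x A ∧ FreeFor y x B
  | all z A => x = z ∨ x ∉ A.fvar ∨ (y ≠ z ∧ FreeFor y x A)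
  | ex z A => x = z ∨ x ∉ A.fvar ∨ (y ≠ z ∧ FreeFor y x A)
  | just _ X A => Sum.inl x ∈ X → FreeFor y x A

/-- Action of a renaming on arguments. -/
def subR (σ : ℕ → ℕ) : ℕ ⊕ K → ℕ ⊕ K
  | .inl x => .inl (σ x)
  | .inr a => .inr a

/-- Renaming of all (free and bound) individual variables. -/
noncomputable def rename (σ : ℕ → ℕ) : Fm K → Fm K
  | pred Q args => pred Q (args.map (subR σ))
  | neg A => neg (A.rename σ)
  | imp A B => imp (A.rename σ) (B.rename σ)
  | all x A => all (σ x) (A.rename σ)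
  | ex x A => ex (σ x) (A.rename σ)
  | just t X A => just t (X.image (subR σ)) (A.rename σ)

/-- Mapping the extra individual constants of a `K`-formula along `f : K → K'`. -/
noncomputable def kmap (f : K → K') : Fm K → Fm K'
  | pred Q args => pred Q (args.map (Sum.map id f))
  | neg A => neg (A.kmap f)
  | imp A B => imp (A.kmap f) (B.kmap f)
  | all x A => all x (A.kmap f)
  | ex x A => ex x (A.kmap f)
  | just t X A => just t (X.image (Sum.map id f)) (A.kmap f)

/-- A size measure used for the well-founded recursion defining truth. -/
noncomputable def size : Fm K → ℕ
  | pred _ _ => 0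
  | neg A => A.size + 1
  | imp A B => A.size + B.size + 1
  | all _ A => A.size + 1
  | ex _ A => A.size + 1
  | just _ _ A => A.size + A.fvar.card + 1


theorem fvar_msubst_subset (σ : ℕ → Option K) (A : Fm K) :
    (A.msubst σ).fvar ⊆ A.fvar := by
  induction A generalizing σ with
  | pred Q args =>
      intro y hy
      simp only [msubst, fvar, List.mem_toFinset, List.mem_filterMap, List.mem_map] at hy ⊢
      obtain ⟨s, ⟨a, ha, rfl⟩, hget⟩ := hy
      cases a with
      | inl z =>
          cases hσ : σ z with
          | none =>
              simp [subK, hσ] at hget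
              exact ⟨Sum.inl z, ha, by simp [hget]⟩
          | some b => simp [subK, hσ] at hget
      | inr b => simp [subK] at hget
  | neg A ih => exact ih σ
  | imp A B ihA ihB =>
      simp only [msubst, fvar]
      exact Finset.union_subset_union (ihA σ) (ihB σ)
  | all x A ih =>
      simp only [msubst, fvar]
      exact Finset.erase_subset_erase x (ih _)
  | ex x A ih =>
      simp only [msubst, fvar]
      exact Finset.erase_subset_erase x (ih _)
  | just t X A ih =>
      intro y hy
      simp only [msubst, fvar, List.mem_toFinset, List.mem_filterMap,
        Finset.mem_toList, Finset.mem_image] at hy ⊢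
      obtain ⟨s, ⟨a, ha, rfl⟩, hget⟩ := hy
      cases a with
      | inl z =>
          cases hσ : σ z with
          | none =>
              refine ⟨Sum.inl z, ha, ?_⟩
              simp only [subK, hσ, Option.elim] at hget
              simpa using hget
          | some b => simp [subK, hσ] at hget
      | inr b => simp [subK] at hget

theorem size_msubst_le (σ : ℕ → Option K) (A : Fm K) :
    (A.msubst σ).size ≤ A.size := by
  induction A generalizing σ with
  | pred Q args => simp [msubst, size]
  | neg A ih => simpa [msubst, size] using ih σ
  | imp A B ihA ihB =>
      simp only [msubst, size]
      have := ihA σ; have := ihB σ; omega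
  | all x A ih => simpa [msubst, size] using ih _
  | ex x A ih => simpa [msubst, size] using ih _
  | just t X A ih =>
      simp only [msubst, size]
      have h1 := ih (fun y => if Sum.inl y ∈ X then σ y else none)
      have h2 := Finset.card_le_card
        (fvar_msubst_subset (fun y => if Sum.inl y ∈ X then σ y else none) A)
      omega

theorem size_subst1_le (x : ℕ) (a : K) (A : Fm K) : (A.subst1 x a).size ≤ A.size :=
  size_msubst_le _ A


/-- `∀A`, the universal closure of `A`. -/
noncomputable def univClosure (A : Fm K) : Fm K :=
  (A.fvar.sort (· ≤ ·)).foldr Fm.all A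

theorem size_foldr_all (l : List ℕ) (A : Fm K) :
    (l.foldr Fm.all A).size = A.size + l.length := by
  induction l with
  | nil => simp
  | cons z l ih => simp only [List.foldr, size, ih, List.length_cons]; omega

theorem size_univClosure (A : Fm K) :
    A.univClosure.size = A.size + A.fvar.card := by
  simp [univClosure, size_foldr_all, Finset.length_sort]

end Fm

/-- Embedding plain FOLP formulas into `K`-formulas. -/
noncomputable def toK {K : Type} : Fm Empty → Fm K := Fm.kmap (fun a => a.elim)

/-- Two FOLP formulas are variable variants if each can be turned into the other
by a renaming of free and bound individual variables. -/
def VariableVariant (A B : Fm Empty) : Prop := ∃ σ : Equiv.Perm ℕ, B = A.rename σ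

/-- The axioms of FOLP: a complete list of first order axiom schemes together
with the justification axiom schemes Ctr, Exp, Sum, jK, jT, j4, Gen. -/
inductive FOLPAxiom : Fm Empty → Prop
  | p1 (A B : Fm Empty) : FOLPAxiom (A.imp (B.imp A))
  | p2 (A B C : Fm Empty) : FOLPAxiom ((A.imp (B.imp C)).imp ((A.imp B).imp (A.imp C)))
  | p3 (A B : Fm Empty) : FOLPAxiom (((A.neg).imp (B.neg)).imp (B.imp A))
  | allElim (x y : ℕ) (A : Fm Empty) : Fm.FreeFor y x A → FOLPAxiom ((Fm.all x A).imp (A.vsubst x y))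
  | allImp (x : ℕ) (A B : Fm Empty) : x ∉ A.fvar →
      FOLPAxiom ((Fm.all x (A.imp B)).imp (A.imp (Fm.all x B)))
  | exIntro (x y : ℕ) (A : Fm Empty) : Fm.FreeFor y x A → FOLPAxiom ((A.vsubst x y).imp (Fm.ex x A))
  | exElim (x : ℕ) (A B : Fm Empty) : x ∉ B.fvar →
      FOLPAxiom ((Fm.all x (A.imp B)).imp ((Fm.ex x A).imp B))
  | ctr (t : Tm) (X : Finset (ℕ ⊕ Empty)) (A : Fm Empty) (y : ℕ) : Sum.inl y ∉ X → y ∉ A.fvar →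
      FOLPAxiom ((Fm.just t (insert (Sum.inl y) X) A).imp (Fm.just t X A))
  | exp (t : Tm) (X : Finset (ℕ ⊕ Empty)) (A : Fm Empty) (y : ℕ) : Sum.inl y ∉ X →
      FOLPAxiom ((Fm.just t X A).imp (Fm.just t (insert (Sum.inl y) X) A))
  | sum1 (s t : Tm) (X : Finset (ℕ ⊕ Empty)) (A : Fm Empty) : FOLPAxiom ((Fm.just s X A).imp (Fm.just (Tm.plus s t) X A))
  | sum2 (s t : Tm) (X : Finset (ℕ ⊕ Empty)) (A : Fm Empty) : FOLPAxiom ((Fm.just s X A).imp (Fm.just (Tm.plus t s) X A))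
  | jK (s t : Tm) (X : Finset (ℕ ⊕ Empty)) (A B : Fm Empty) : FOLPAxiom ((Fm.just s X (A.imp B)).imp
      ((Fm.just t X A).imp (Fm.just (Tm.app s t) X B)))
  | jT (t : Tm) (X : Finset (ℕ ⊕ Empty)) (A : Fm Empty) : FOLPAxiom ((Fm.just t X A).imp A)
  | j4 (t : Tm) (X : Finset (ℕ ⊕ Empty)) (A : Fm Empty) : FOLPAxiom ((Fm.just t X A).imp (Fm.just (Tm.bang t) X (Fm.just t X A)))
  | gen (t : Tm) (X : Finset (ℕ ⊕ Empty)) (A : Fm Empty) (x : ℕ) : Sum.inl x ∉ X →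
      FOLPAxiom ((Fm.just t X A).imp (Fm.just (Tm.gen x t) X (Fm.all x A)))

/-- A constant specification is a set of pairs `(c, A)`, read `c : A`
(that is, `c :_∅ A`), where `A` is an axiom instance. -/
def ConstantSpec (CS : Set (ℕ × Fm Empty)) : Prop := ∀ p ∈ CS, FOLPAxiom p.2

/-- `CS` is axiomatically appropriate: every axiom instance has a constant justifying it. -/
def AxiomaticallyAppropriate (CS : Set (ℕ × Fm Empty)) : Prop :=
  ∀ A, FOLPAxiom A → ∃ c, (c, A) ∈ CS

/-- `CS` is variant closed. -/
def VariantClosed (CS : Set (ℕ × Fm Empty)) : Prop :=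
  ∀ c A B, VariableVariant A B → ((c, A) ∈ CS ↔ (c, B) ∈ CS)

/-- Derivability in the axiomatic system `FOLP_CS`:  axioms, axiom necessitation
restricted to `CS`, modus ponens, and universal generalization. -/
inductive Deriv (CS : Set (ℕ × Fm Empty)) : Fm Empty → Prop
  | ax {A : Fm Empty} : FOLPAxiom A → Deriv CS A
  | an {c : ℕ} {A : Fm Empty} : (c, A) ∈ CS → Deriv CS (Fm.just (Tm.jconst c) ∅ A)
  | mp {A B : Fm Empty} : Deriv CS (A.imp B) → Deriv CS A → Deriv CS B
  | ug {A : Fm Empty} (x : ℕ) : Deriv CS A → Deriv CS (Fm.all x A)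

/-- A Mkrtychev model of `FOLP_CS` with domain `D`:  an interpretation `I` of the
predicate symbols and an admissible evidence function `E` satisfying E1–E6. -/
structure MModel (CS : Set (ℕ × Fm Empty)) (D : Type) : Type where
  dom_nonempty : Nonempty D
  I : ℕ → Set (List D)
  E : Tm → Set (Fm D)
  e1 : ∀ c A, (c, A) ∈ CS → toK A ∈ E (Tm.jconst c)
  e2 : ∀ s t (A B : Fm D), Fm.imp A B ∈ E s → A ∈ E t → B ∈ E (Tm.app s t)
  e3 : ∀ s t, E s ∪ E t ⊆ E (Tm.plus s t)
  e4 : ∀ t (A : Fm D) (X : Finset D), A ∈ E t → A.kocc ⊆ X →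
      Fm.just t (X.image Sum.inr) A ∈ E (Tm.bang t)
  e5 : ∀ t (x : ℕ) (A : Fm D), A ∈ E t → Fm.all x A ∈ E (Tm.gen x t)
  e6 : ∀ t (A : Fm D) (x : ℕ) (a : D), A ∈ E t → A.subst1 x a ∈ E t

/-- Truth of a (closed) `D`-formula in a Mkrtychev model. -/
noncomputable def MModel.Sat {CS : Set (ℕ × Fm Empty)} {D : Type} (M : MModel CS D) :
    Fm D → Prop
  | .pred Q args => ∃ as : List D, args = as.map Sum.inr ∧ as ∈ M.I Q
  | .neg A => ¬ M.Sat A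
  | .imp A B => M.Sat A → M.Sat B
  | .all x A => ∀ a : D, M.Sat (A.subst1 x a)
  | .ex x A => ∃ a : D, M.Sat (A.subst1 x a)
  | .just t _ A => A ∈ M.E t ∧ M.Sat A.univClosure
  termination_by F => F.size
  decreasing_by
    all_goals simp only [Fm.size, Fm.size_univClosure]
    all_goals first
      | omega
      | exact Nat.lt_succ_of_le (Fm.size_subst1_le _ _ _)

/-- Truth of an FOLP sentence in a Mkrtychev model. -/
noncomputable def MModel.SatSentence {CS : Set (ℕ × Fm Empty)} {D : Type}
    (M : MModel CS D) (F : Fm Empty) : Prop := M.Sat (toK F)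

/-- A sentence is `FOLP_CS`-valid if it is true in every Mkrtychev model of `FOLP_CS`. -/
def FOLPValid (CS : Set (ℕ × Fm Empty)) (F : Fm Empty) : Prop :=
  ∀ (D : Type) (M : MModel CS D), M.SatSentence F

/-- Satisfiability of a closed Par-formula `A(u₁,…,uₙ)` in a model:
`M ⊩ A(a₁,…,aₙ)` for some `a₁,…,aₙ ∈ D`. -/
noncomputable def MModel.SatPar {CS : Set (ℕ × Fm Empty)} {D : Type}
    (M : MModel CS D) (F : Fm ℕ) : Prop :=
  ∃ g : ℕ → D, M.Sat (F.kmap g)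

/-- `X ⊆ Par`: the set `X` consists of parameters only. -/
def XPar (X : Finset (ℕ ⊕ ℕ)) : Prop := ∀ s ∈ X, ∃ u : ℕ, s = Sum.inr u

/-- One application of an FOLP tableau rule to a branch (represented by the set `S`
of closed Par-formulas occurring on it), producing the list of extended branches
(one branch for a non-branching rule, two for a branching rule). -/
inductive TabRule : Set (Fm ℕ) → List (Set (Fm ℕ)) → Prop
  | fneg {S A} : Fm.neg (Fm.neg A) ∈ S → TabRule S [insert A S]
  | timp {S A B} : Fm.imp A B ∈ S → TabRule S [insert (Fm.neg A) S, insert B S]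
  | fimp {S A B} : Fm.neg (Fm.imp A B) ∈ S → TabRule S [insert A (insert (Fm.neg B) S)]
  | tall {S x A} (u : ℕ) : Fm.all x A ∈ S → TabRule S [insert (A.subst1 x u) S]
  | fex {S x A} (u : ℕ) : Fm.neg (Fm.ex x A) ∈ S →
      TabRule S [insert (Fm.neg (A.subst1 x u)) S]
  | tex {S x A} (u : ℕ) : Fm.ex x A ∈ S → (∀ F ∈ S, u ∉ F.kocc) →
      TabRule S [insert (A.subst1 x u) S]
  | fall {S x A} (u : ℕ) : Fm.neg (Fm.all x A) ∈ S → (∀ F ∈ S, u ∉ F.kocc) →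
      TabRule S [insert (Fm.neg (A.subst1 x u)) S]
  | tcolon {S t X A} : Fm.just t X A ∈ S → XPar X → TabRule S [insert A.univClosure S]
  | fplus {S t s X A} : Fm.neg (Fm.just (Tm.plus t s) X A) ∈ S → XPar X →
      TabRule S [insert (Fm.neg (Fm.just t X A)) (insert (Fm.neg (Fm.just s X A)) S)]
  | fapp {S s t X B} (A : Fm ℕ) : Fm.neg (Fm.just (Tm.app s t) X B) ∈ S → XPar X →
      (∀ u ∈ A.kocc, Sum.inr u ∈ X) →
      TabRule S [insert (Fm.neg (Fm.just s X (A.imp B))) S,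
                 insert (Fm.neg (Fm.just t X A)) S]
  | fbang {S t X A} : Fm.neg (Fm.just (Tm.bang t) X (Fm.just t X A)) ∈ S → XPar X →
      TabRule S [insert (Fm.neg (Fm.just t X A)) S]
  | ctr {S t X A} (u : ℕ) : Fm.neg (Fm.just t X A) ∈ S → XPar X → Sum.inr u ∉ X →
      TabRule S [insert (Fm.neg (Fm.just t (insert (Sum.inr u) X) A)) S]
  | exp {S t X A} (u : ℕ) : Fm.neg (Fm.just t (insert (Sum.inr u) X) A) ∈ S →
      XPar X → Sum.inr u ∉ X → u ∉ A.kocc →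
      TabRule S [insert (Fm.neg (Fm.just t X A)) S]
  | ins {S t X A} (x u : ℕ) : Fm.neg (Fm.just t X (A.subst1 x u)) ∈ S → XPar X →
      TabRule S [insert (Fm.neg (Fm.just t X A)) S]
  | genx {S t X A x} : Fm.neg (Fm.just (Tm.gen x t) X (Fm.all x A)) ∈ S → XPar X →
      TabRule S [insert (Fm.neg (Fm.just t X A)) S]

/-- `ClosedTableau CS S`: there is a closed `FOLP_CS`-tableau beginning with the
formulas of `S`.  A branch closes if it contains both `A` and `¬A`, or contains
`¬c:A` with `c:A ∈ CS`. -/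
inductive ClosedTableau (CS : Set (ℕ × Fm Empty)) : Set (Fm ℕ) → Prop
  | close {S A} : A ∈ S → Fm.neg A ∈ S → ClosedTableau CS S
  | closeCS {S c A} : (c, A) ∈ CS →
      Fm.neg (Fm.just (Tm.jconst c) ∅ (toK A)) ∈ S → ClosedTableau CS S
  | step {S l} : TabRule S l → (∀ S' ∈ l, ClosedTableau CS S') → ClosedTableau CS S

/-- An `FOLP_CS`-tableau proof of the sentence `F`: a closed tableau beginning
with `¬F`. -/
def TabProof (CS : Set (ℕ × Fm Empty)) (F : Fm Empty) : Prop :=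
  ClosedTableau CS {Fm.neg (toK F)}

/-- A set of closed Par-formulas is tableau `FOLP_CS`-consistent if no finite
subset of it has a closed `FOLP_CS`-tableau. -/
def TabConsistent (CS : Set (ℕ × Fm Empty)) (Γ : Set (Fm ℕ)) : Prop :=
  ∀ S : Set (Fm ℕ), S ⊆ Γ → S.Finite → ¬ ClosedTableau CS S

/-- `Γ` is maximal: it has no proper tableau consistent extension by closed Par-formulas. -/
def MaximalCons (CS : Set (ℕ × Fm Empty)) (Γ : Set (Fm ℕ)) : Prop :=
  TabConsistent CS Γ ∧
    ∀ Δ : Set (Fm ℕ), Γ ⊆ Δ → (∀ F ∈ Δ, F.Closed) → TabConsistent CS Δ → Δ = Γ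

/-- `Γ` is E-complete (with parameters as witnesses). -/
def EComplete (Γ : Set (Fm ℕ)) : Prop :=
  (∀ (x : ℕ) (A : Fm ℕ), Fm.ex x A ∈ Γ → ∃ u : ℕ, A.subst1 x u ∈ Γ) ∧
  (∀ (x : ℕ) (A : Fm ℕ), Fm.neg (Fm.all x A) ∈ Γ → ∃ u : ℕ, Fm.neg (A.subst1 x u) ∈ Γ)

/-- The interpretation of the canonical model determined by `Γ`:
`I(Q) = { (u₁,…,uₙ) | Q(u₁,…,uₙ) ∈ Γ }`. -/
def canI (Γ : Set (Fm ℕ)) (Q : ℕ) : Set (List ℕ) :=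
  {us | Fm.pred Q (us.map Sum.inr) ∈ Γ}

/-- The evidence function of the canonical model determined by `Γ`:
`E(t) = { A | ¬ t:_{Par(A)} A ∉ Γ }`. -/
def canE (Γ : Set (Fm ℕ)) (t : Tm) : Set (Fm ℕ) :=
  {A | Fm.neg (Fm.just t (A.kocc.image Sum.inr) A) ∉ Γ}

/-! ### Auxiliary development for the completeness proof -/

namespace Completeness

open Fm

theorem toFinset_inst_irrel {α : Type*} {inst : DecidableEq α} (l : List α) (a : α) :
    a ∈ @List.toFinset α inst l ↔ a ∈ l := by
  have h : inst = Classical.decEq α := Subsingleton.elim _ _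
  subst h
  exact List.mem_toFinset

/-- Membership in the "left parts" finset. -/
theorem mem_lefts {K : Type} {inst : DecidableEq ℕ} (X : Finset (ℕ ⊕ K)) (y : ℕ) :
    y ∈ @List.toFinset ℕ inst (X.toList.filterMap Sum.getLeft?) ↔ Sum.inl y ∈ X := by
  simp only [toFinset_inst_irrel, List.mem_filterMap, Finset.mem_toList]
  constructor
  · rintro ⟨s, hs, h⟩
    cases s with
    | inl a => simp [Sum.getLeft?] at h; subst h; exact hs
    | inr a => simp [Sum.getLeft?] at h
  · intro h; exact ⟨Sum.inl y, h, rfl⟩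

theorem mem_rights {K : Type} {inst : DecidableEq K} (X : Finset (ℕ ⊕ K)) (a : K) :
    a ∈ @List.toFinset K inst (X.toList.filterMap Sum.getRight?) ↔ Sum.inr a ∈ X := by
  simp only [toFinset_inst_irrel, List.mem_filterMap, Finset.mem_toList]
  constructor
  · rintro ⟨s, hs, h⟩
    cases s with
    | inl b => simp [Sum.getRight?] at h
    | inr b => simp [Sum.getRight?] at h; subst h; exact hs
  · intro h; exact ⟨Sum.inr a, h, rfl⟩


theorem mem_image_any {α β : Type*} {inst : DecidableEq β} {f : α → β} {s : Finset α} {b : β} :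
    b ∈ @Finset.image α β inst f s ↔ ∃ a ∈ s, f a = b := by
  have h : inst = Classical.decEq β := Subsingleton.elim _ _
  subst h
  exact Finset.mem_image

theorem mem_fvar_just {K : Type} {t : Tm} {X : Finset (ℕ ⊕ K)} {A : Fm K} {y : ℕ} :
    y ∈ (Fm.just t X A).fvar ↔ Sum.inl y ∈ X := by
  simp only [Fm.fvar]
  exact mem_lefts X y

theorem mem_kocc_just {K : Type} {t : Tm} {X : Finset (ℕ ⊕ K)} {A : Fm K} {a : K} :
    a ∈ (Fm.just t X A).kocc ↔ a ∈ A.kocc ∨ Sum.inr a ∈ X := by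
  simp only [Fm.kocc]
  rw [Finset.mem_union, mem_rights]

/-- If a variable is free in a substituted formula, it was free before and not substituted. -/
theorem fvar_mem_msubst {K : Type} {σ : ℕ → Option K} {A : Fm K} {y : ℕ}
    (h : y ∈ (A.msubst σ).fvar) : y ∈ A.fvar ∧ σ y = none := by
  induction A generalizing σ with
  | pred Q args =>
      simp only [msubst, fvar, List.mem_toFinset, List.mem_filterMap, List.mem_map] at h
      obtain ⟨s, ⟨a, ha, rfl⟩, hget⟩ := h
      cases a with
      | inl z =>
          cases hσ : σ z with
          | none =>
              simp [subK, hσ, Sum.getLeft?] at hget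
              subst hget
              refine ⟨?_, hσ⟩
              simp only [fvar, List.mem_toFinset, List.mem_filterMap]
              exact ⟨Sum.inl z, ha, rfl⟩
          | some b => simp [subK, hσ, Sum.getLeft?] at hget
      | inr b => simp [subK, Sum.getLeft?] at hget
  | neg A ih => exact ih h
  | imp A B ihA ihB =>
      simp only [msubst, fvar, Finset.mem_union] at h ⊢
      rcases h with h | h
      · exact ⟨Or.inl (ihA h).1, (ihA h).2⟩
      · exact ⟨Or.inr (ihB h).1, (ihB h).2⟩
  | all x A ih =>
      simp only [msubst, fvar, Finset.mem_erase] at h ⊢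
      obtain ⟨hyx, h⟩ := h
      have := ih h
      rw [if_neg hyx] at this
      exact ⟨⟨hyx, this.1⟩, this.2⟩
  | ex x A ih =>
      simp only [msubst, fvar, Finset.mem_erase] at h ⊢
      obtain ⟨hyx, h⟩ := h
      have := ih h
      rw [if_neg hyx] at this
      exact ⟨⟨hyx, this.1⟩, this.2⟩
  | just t X A ih =>
      simp only [msubst] at h
      rw [mem_fvar_just, mem_image_any] at h
      obtain ⟨s, hs, heq⟩ := h
      rw [mem_fvar_just]
      cases s with
      | inl z =>
          cases hσ : σ z with
          | none =>
              simp [subK, hσ] at heq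
              subst heq
              exact ⟨hs, hσ⟩
          | some b => simp [subK, hσ] at heq
      | inr b => simp [subK] at heq

theorem kocc_msubst_mem {K : Type} {σ : ℕ → Option K} {A : Fm K} {a : K}
    (h : a ∈ (A.msubst σ).kocc) : a ∈ A.kocc ∨ ∃ x, σ x = some a := by
  induction A generalizing σ with
  | pred Q args =>
      simp only [msubst, kocc, List.mem_toFinset, List.mem_filterMap, List.mem_map] at h
      obtain ⟨s, ⟨b, hb, rfl⟩, hget⟩ := h
      cases b with
      | inl z =>
          cases hσ : σ z with
          | none => simp [subK, hσ, Sum.getRight?] at hget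
          | some c =>
              simp [subK, hσ, Sum.getRight?] at hget
              exact Or.inr ⟨z, by rw [hσ, hget]⟩
      | inr c =>
          simp [subK, Sum.getRight?] at hget
          subst hget
          left
          simp only [kocc, List.mem_toFinset, List.mem_filterMap]
          exact ⟨Sum.inr c, hb, rfl⟩
  | neg A ih => exact ih h
  | imp A B ihA ihB =>
      simp only [msubst, kocc, Finset.mem_union] at h ⊢
      rcases h with h | h
      · rcases ihA h with h' | h'
        · exact Or.inl (Or.inl h')
        · exact Or.inr h'
      · rcases ihB h with h' | h'
        · exact Or.inl (Or.inr h')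
        · exact Or.inr h'
  | all x A ih =>
      simp only [msubst, kocc] at h ⊢
      rcases ih h with h' | ⟨z, hz⟩
      · exact Or.inl h'
      · by_cases hzx : z = x
        · simp [hzx] at hz
        · exact Or.inr ⟨z, by simpa [hzx] using hz⟩
  | ex x A ih =>
      simp only [msubst, kocc] at h ⊢
      rcases ih h with h' | ⟨z, hz⟩
      · exact Or.inl h'
      · by_cases hzx : z = x
        · simp [hzx] at hz
        · exact Or.inr ⟨z, by simpa [hzx] using hz⟩
  | just t X A ih =>
      simp only [msubst] at h
      rw [mem_kocc_just] at h
      rcases h with h | h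
      · rcases ih h with h' | ⟨z, hz⟩
        · exact Or.inl (mem_kocc_just.mpr (Or.inl h'))
        · by_cases hzX : Sum.inl z ∈ X
          · exact Or.inr ⟨z, by simpa [hzX] using hz⟩
          · simp [hzX] at hz
      · rw [mem_image_any] at h
        obtain ⟨s, hs, heq⟩ := h
        cases s with
        | inl z =>
            cases hσ : σ z with
            | none => simp [subK, hσ] at heq
            | some b =>
                simp [subK, hσ] at heq
                exact Or.inr ⟨z, by rw [hσ, heq]⟩
        | inr b =>
            simp [subK] at heq
            subst heq
            exact Or.inl (mem_kocc_just.mpr (Or.inr hs))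

theorem kocc_subset_msubst {K : Type} (σ : ℕ → Option K) (A : Fm K) :
    A.kocc ⊆ (A.msubst σ).kocc := by
  induction A generalizing σ with
  | pred Q args =>
      intro a ha
      simp only [msubst, kocc, List.mem_toFinset, List.mem_filterMap, List.mem_map] at ha ⊢
      obtain ⟨s, hs, hget⟩ := ha
      cases s with
      | inl z => simp [Sum.getRight?] at hget
      | inr b =>
          simp only [Sum.getRight?, Option.some.injEq] at hget
          subst hget
          exact ⟨Sum.inr b, ⟨Sum.inr b, hs, rfl⟩, by simp [subK, Sum.getRight?]⟩
  | neg A ih => exact ih σ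
  | imp A B ihA ihB =>
      simp only [msubst, kocc]
      exact Finset.union_subset_union (ihA σ) (ihB σ)
  | all x A ih => exact ih _
  | ex x A ih => exact ih _
  | just t X A ih =>
      intro a ha
      rw [mem_kocc_just] at ha
      simp only [msubst]
      rw [mem_kocc_just]
      rcases ha with ha | ha
      · exact Or.inl (ih _ ha)
      · exact Or.inr (mem_image_any.mpr ⟨Sum.inr a, ha, by simp [subK]⟩)


/-- Closedness of a substitution instance. -/
theorem closed_subst1 {A : Fm ℕ} {x : ℕ} (h : A.fvar ⊆ {x}) (u : ℕ) :
    (A.subst1 x u).Closed := by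
  rw [Fm.Closed, Finset.eq_empty_iff_forall_notMem]
  intro y hy
  obtain ⟨hy1, hy2⟩ := fvar_mem_msubst hy
  have := h hy1
  simp at this
  subst this
  simp at hy2

theorem fvar_all_subset {A : Fm ℕ} {x : ℕ} (h : (Fm.all x A).Closed) : A.fvar ⊆ {x} := by
  intro y hy
  simp only [Finset.mem_singleton]
  by_contra hne
  have : y ∈ (Fm.all x A).fvar := by
    simp [fvar, Finset.mem_erase, hne, hy]
  rw [h] at this
  simp at this

theorem fvar_ex_subset {A : Fm ℕ} {x : ℕ} (h : (Fm.ex x A).Closed) : A.fvar ⊆ {x} := by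
  intro y hy
  simp only [Finset.mem_singleton]
  by_contra hne
  have : y ∈ (Fm.ex x A).fvar := by
    simp [fvar, Finset.mem_erase, hne, hy]
  rw [h] at this
  simp at this

theorem fvar_foldr_all {K : Type} (l : List ℕ) (A : Fm K) :
    (l.foldr Fm.all A).fvar = A.fvar \ l.toFinset := by
  induction l with
  | nil => simp
  | cons z l ih =>
      simp only [List.foldr, fvar, ih, List.toFinset_cons]
      ext y
      simp only [Finset.mem_erase, Finset.mem_sdiff, Finset.mem_insert]
      tauto

theorem closed_univClosure {K : Type} (A : Fm K) : A.univClosure.Closed := by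
  rw [Fm.Closed, Fm.univClosure, fvar_foldr_all]
  simp

/-- kocc of the universal closure. -/
theorem kocc_foldr_all {K : Type} (l : List ℕ) (A : Fm K) :
    (l.foldr Fm.all A).kocc = A.kocc := by
  induction l with
  | nil => rfl
  | cons z l ih => simp only [List.foldr, kocc, ih]

theorem kocc_univClosure {K : Type} (A : Fm K) : A.univClosure.kocc = A.kocc := by
  rw [Fm.univClosure, kocc_foldr_all]

/-- The invariant: in every justification subformula `t :_X B`, all parameters
of `B` belong to `X`. -/
def Inv : Fm ℕ → Prop
  | .pred _ _ => True
  | .neg A => Inv A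
  | .imp A B => Inv A ∧ Inv B
  | .all _ A => Inv A
  | .ex _ A => Inv A
  | .just _ X A => Inv A ∧ ∀ a ∈ A.kocc, Sum.inr a ∈ X

theorem Inv_msubst {σ : ℕ → Option ℕ} {A : Fm ℕ} (h : Inv A) : Inv (A.msubst σ) := by
  induction A generalizing σ with
  | pred Q args => trivial
  | neg A ih => exact ih h
  | imp A B ihA ihB => exact ⟨ihA h.1, ihB h.2⟩
  | all x A ih => exact ih h
  | ex x A ih => exact ih h
  | just t X A ih =>
      refine ⟨ih h.1, ?_⟩
      intro a ha
      rcases kocc_msubst_mem ha with ha' | ⟨z, hz⟩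
      · exact mem_image_any.mpr ⟨_, h.2 a ha', by simp [subK]⟩
      · by_cases hzX : Sum.inl z ∈ X
        · simp only [hzX, if_pos] at hz
          exact mem_image_any.mpr ⟨Sum.inl z, hzX, by simp [Fm.subK, hz]⟩
        · simp [hzX] at hz

theorem Inv_subst1 {A : Fm ℕ} (x u : ℕ) (h : Inv A) : Inv (A.subst1 x u) := Inv_msubst h

theorem Inv_foldr_all (l : List ℕ) {A : Fm ℕ} (h : Inv A) : Inv (l.foldr Fm.all A) := by
  induction l with
  | nil => exact h
  | cons z l ih => exact ih

theorem Inv_univClosure {A : Fm ℕ} (h : Inv A) : Inv A.univClosure := Inv_foldr_all _ h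

theorem XPar_of_closed {t : Tm} {X : Finset (ℕ ⊕ ℕ)} {A : Fm ℕ}
    (h : (Fm.just t X A).Closed) : XPar X := by
  intro s hs
  cases s with
  | inl y =>
      exfalso
      have : y ∈ (Fm.just t X A).fvar := mem_fvar_just.mpr hs
      rw [h] at this
      simp at this
  | inr u => exact ⟨u, rfl⟩

theorem Closed_neg_iff {K : Type} {A : Fm K} : (Fm.neg A).Closed ↔ A.Closed := Iff.rfl

/-- Facts about `toK`. -/
theorem fvar_toK (A : Fm Empty) : (toK (K := ℕ) A).fvar = A.fvar := by
  induction A with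
  | pred Q args =>
      simp only [toK, Fm.kmap, fvar]
      congr 1
      induction args with
      | nil => rfl
      | cons s args ih =>
          cases s with
          | inl y => simp [Sum.getLeft?, Sum.map] at ih ⊢; exact ih
          | inr e => exact e.elim
  | neg A ih => exact ih
  | imp A B ihA ihB => simp only [toK, Fm.kmap, fvar] at ihA ihB ⊢; rw [ihA, ihB]
  | all x A ih => simp only [toK, Fm.kmap, fvar] at ih ⊢; rw [ih]
  | ex x A ih => simp only [toK, Fm.kmap, fvar] at ih ⊢; rw [ih]
  | just t X A ih =>
      simp only [toK, Fm.kmap]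
      ext y
      rw [mem_fvar_just, mem_fvar_just, mem_image_any]
      constructor
      · rintro ⟨s, hs, heq⟩
        cases s with
        | inl z => simp [Sum.map] at heq; subst heq; exact hs
        | inr e => exact e.elim
      · intro h; exact ⟨Sum.inl y, h, by simp [Sum.map]⟩

theorem kocc_toK (A : Fm Empty) : (toK (K := ℕ) A).kocc = ∅ := by
  induction A with
  | pred Q args =>
      simp only [toK, Fm.kmap, kocc]
      rw [Finset.eq_empty_iff_forall_notMem]
      intro a ha
      simp only [List.mem_toFinset, List.mem_filterMap, List.mem_map] at ha
      obtain ⟨s, ⟨b, hb, rfl⟩, hget⟩ := ha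
      cases b with
      | inl y => simp [Sum.map, Sum.getRight?] at hget
      | inr e => exact e.elim
  | neg A ih => exact ih
  | imp A B ihA ihB =>
      simp only [toK, Fm.kmap, kocc] at ihA ihB ⊢
      rw [ihA, ihB]
      simp
  | all x A ih => exact ih
  | ex x A ih => exact ih
  | just t X A ih =>
      simp only [toK, Fm.kmap] at ih ⊢
      rw [Finset.eq_empty_iff_forall_notMem]
      intro a ha
      rw [mem_kocc_just, ih] at ha
      rcases ha with ha | ha
      · simp at ha
      · rw [mem_image_any] at ha
        obtain ⟨s, hs, heq⟩ := ha
        cases s with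
        | inl y => simp [Sum.map] at heq
        | inr e => exact e.elim

theorem Inv_toK (A : Fm Empty) : Inv (toK A) := by
  induction A with
  | pred Q args => trivial
  | neg A ih => exact ih
  | imp A B ihA ihB => exact ⟨ihA, ihB⟩
  | all x A ih => exact ih
  | ex x A ih => exact ih
  | just t X A ih =>
      refine ⟨ih, ?_⟩
      intro a ha
      have h0 := kocc_toK A
      simp only [toK] at h0
      rw [h0] at ha
      simp at ha



variable {CS : Set (ℕ × Fm Empty)} {D : Type} (M : MModel CS D)

theorem sat_pred (Q : ℕ) (args : List (ℕ ⊕ D)) :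
    M.Sat (Fm.pred Q args) ↔ ∃ as : List D, args = as.map Sum.inr ∧ as ∈ M.I Q := by
  rw [MModel.Sat]

theorem sat_neg (A : Fm D) : M.Sat (Fm.neg A) ↔ ¬ M.Sat A := by rw [MModel.Sat]

theorem sat_imp (A B : Fm D) : M.Sat (Fm.imp A B) ↔ (M.Sat A → M.Sat B) := by rw [MModel.Sat]

theorem sat_all (x : ℕ) (A : Fm D) : M.Sat (Fm.all x A) ↔ ∀ a : D, M.Sat (A.subst1 x a) := by
  rw [MModel.Sat]

theorem sat_ex (x : ℕ) (A : Fm D) : M.Sat (Fm.ex x A) ↔ ∃ a : D, M.Sat (A.subst1 x a) := by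
  rw [MModel.Sat]

theorem sat_just (t : Tm) (X : Finset (ℕ ⊕ D)) (A : Fm D) :
    M.Sat (Fm.just t X A) ↔ A ∈ M.E t ∧ M.Sat A.univClosure := by rw [MModel.Sat]


/-! ### Countability -/

def encTm : Tm → ℕ
  | .jvar i => Nat.pair 0 i
  | .jconst i => Nat.pair 1 i
  | .plus s t => Nat.pair 2 (Nat.pair (encTm s) (encTm t))
  | .app s t => Nat.pair 3 (Nat.pair (encTm s) (encTm t))
  | .bang t => Nat.pair 4 (encTm t)
  | .gen x t => Nat.pair 5 (Nat.pair x (encTm t))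

theorem encTm_injective : Function.Injective encTm := by
  intro s
  induction s with
  | jvar i => intro t h; cases t <;> simp [encTm, Nat.pair_eq_pair] at h <;> simp [h]
  | jconst i => intro t h; cases t <;> simp [encTm, Nat.pair_eq_pair] at h <;> simp [h]
  | plus s1 s2 ih1 ih2 =>
      intro t h; cases t <;> simp [encTm, Nat.pair_eq_pair] at h
      rw [ih1 h.1, ih2 h.2]
  | app s1 s2 ih1 ih2 =>
      intro t h; cases t <;> simp [encTm, Nat.pair_eq_pair] at h
      rw [ih1 h.1, ih2 h.2]
  | bang s ih =>
      intro t h; cases t <;> simp [encTm, Nat.pair_eq_pair] at h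
      rw [ih h]
  | gen x s ih =>
      intro t h; cases t <;> simp [encTm, Nat.pair_eq_pair] at h
      rw [h.1, ih h.2]

instance : Countable Tm := ⟨encTm, encTm_injective⟩

noncomputable def encFm : Fm ℕ → ℕ
  | .pred Q args => Nat.pair 0 (Nat.pair Q (Encodable.encode args))
  | .neg A => Nat.pair 1 (encFm A)
  | .imp A B => Nat.pair 2 (Nat.pair (encFm A) (encFm B))
  | .all x A => Nat.pair 3 (Nat.pair x (encFm A))
  | .ex x A => Nat.pair 4 (Nat.pair x (encFm A))
  | .just t X A => Nat.pair 5 (Nat.pair (encTm t) (Nat.pair (Encodable.encode X) (encFm A)))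

theorem encFm_injective : Function.Injective encFm := by
  intro s
  induction s with
  | pred Q args =>
      intro t h; cases t <;> simp [encFm, Nat.pair_eq_pair] at h
      obtain ⟨h1, h2⟩ := h
      rw [h1, h2]
  | neg A ih =>
      intro t h; cases t <;> simp [encFm, Nat.pair_eq_pair] at h
      rw [ih h]
  | imp A B ihA ihB =>
      intro t h; cases t <;> simp [encFm, Nat.pair_eq_pair] at h
      rw [ihA h.1, ihB h.2]
  | all x A ih =>
      intro t h; cases t <;> simp [encFm, Nat.pair_eq_pair] at h
      rw [h.1, ih h.2]
  | ex x A ih =>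
      intro t h; cases t <;> simp [encFm, Nat.pair_eq_pair] at h
      rw [h.1, ih h.2]
  | just tt X A ih =>
      intro t h; cases t <;> simp [encFm, Nat.pair_eq_pair] at h
      rw [encTm_injective h.1, h.2.1, ih h.2.2]

instance : Countable (Fm ℕ) := ⟨encFm, encFm_injective⟩

/-! ### Tasks -/

/-- The saturation tasks for the systematic tableau construction. -/
inductive Task : Type
  | fneg (A : Fm ℕ)
  | timp (A B : Fm ℕ)
  | fimp (A B : Fm ℕ)
  | tall (x : ℕ) (A : Fm ℕ) (u : ℕ)
  | fex (x : ℕ) (A : Fm ℕ) (u : ℕ)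
  | tex (x : ℕ) (A : Fm ℕ)
  | fall (x : ℕ) (A : Fm ℕ)
  | tcolon (t : Tm) (X : Finset (ℕ ⊕ ℕ)) (A : Fm ℕ)
  | fplus (t s : Tm) (X : Finset (ℕ ⊕ ℕ)) (A : Fm ℕ)
  | fapp (s t : Tm) (X : Finset (ℕ ⊕ ℕ)) (B A : Fm ℕ)
  | fbang (t : Tm) (X : Finset (ℕ ⊕ ℕ)) (A : Fm ℕ)
  | ctr (t : Tm) (X : Finset (ℕ ⊕ ℕ)) (A : Fm ℕ) (u : ℕ)
  | exp (t : Tm) (X : Finset (ℕ ⊕ ℕ)) (A : Fm ℕ) (u : ℕ)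
  | ins (t : Tm) (X : Finset (ℕ ⊕ ℕ)) (A : Fm ℕ) (x u : ℕ)
  | genx (t : Tm) (X : Finset (ℕ ⊕ ℕ)) (A : Fm ℕ) (x : ℕ)

abbrev Tup : Type := ℕ × ℕ × ℕ × Tm × Tm × Finset (ℕ ⊕ ℕ) × Fm ℕ × Fm ℕ

def ofTup : Tup → Task := fun (tag, x, u, t, s, X, A, B) =>
  match tag with
  | 0 => .fneg A
  | 1 => .timp A B
  | 2 => .fimp A B
  | 3 => .tall x A u
  | 4 => .fex x A u
  | 5 => .tex x A
  | 6 => .fall x A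
  | 7 => .tcolon t X A
  | 8 => .fplus t s X A
  | 9 => .fapp s t X B A
  | 10 => .fbang t X A
  | 11 => .ctr t X A u
  | 12 => .exp t X A u
  | 13 => .ins t X A x u
  | _ => .genx t X A x

theorem ofTup_surjective : Function.Surjective ofTup := by
  intro task
  cases task with
  | fneg A => exact ⟨(0, 0, 0, Tm.jvar 0, Tm.jvar 0, ∅, A, A), rfl⟩
  | timp A B => exact ⟨(1, 0, 0, Tm.jvar 0, Tm.jvar 0, ∅, A, B), rfl⟩
  | fimp A B => exact ⟨(2, 0, 0, Tm.jvar 0, Tm.jvar 0, ∅, A, B), rfl⟩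
  | tall x A u => exact ⟨(3, x, u, Tm.jvar 0, Tm.jvar 0, ∅, A, A), rfl⟩
  | fex x A u => exact ⟨(4, x, u, Tm.jvar 0, Tm.jvar 0, ∅, A, A), rfl⟩
  | tex x A => exact ⟨(5, x, 0, Tm.jvar 0, Tm.jvar 0, ∅, A, A), rfl⟩
  | fall x A => exact ⟨(6, x, 0, Tm.jvar 0, Tm.jvar 0, ∅, A, A), rfl⟩
  | tcolon t X A => exact ⟨(7, 0, 0, t, t, X, A, A), rfl⟩
  | fplus t s X A => exact ⟨(8, 0, 0, t, s, X, A, A), rfl⟩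
  | fapp s t X B A => exact ⟨(9, 0, 0, t, s, X, A, B), rfl⟩
  | fbang t X A => exact ⟨(10, 0, 0, t, t, X, A, A), rfl⟩
  | ctr t X A u => exact ⟨(11, 0, u, t, t, X, A, A), rfl⟩
  | exp t X A u => exact ⟨(12, 0, u, t, t, X, A, A), rfl⟩
  | ins t X A x u => exact ⟨(13, x, u, t, t, X, A, A), rfl⟩
  | genx t X A x => exact ⟨(14, x, 0, t, t, X, A, A), rfl⟩

/-- A fair enumeration of all tasks: every task appears at arbitrarily late stages. -/
instance : Nonempty Tm := ⟨Tm.jvar 0⟩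
instance : Nonempty (Fm ℕ) := ⟨Fm.pred 0 []⟩

theorem exists_fair_enum : ∃ g : ℕ → Task, ∀ (task : Task) (m : ℕ), ∃ n, m ≤ n ∧ g n = task := by
  have : Countable Tup := inferInstance
  obtain ⟨f, hf⟩ := exists_surjective_nat Tup
  refine ⟨fun n => ofTup (f (Nat.unpair n).1), ?_⟩
  intro task m
  obtain ⟨tup, htup⟩ := ofTup_surjective task
  obtain ⟨k, hk⟩ := hf tup
  refine ⟨Nat.pair k m, ?_, ?_⟩
  · exact Nat.right_le_pair k m
  · show ofTup (f (Nat.unpair (Nat.pair k m)).1) = task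
    rw [Nat.unpair_pair]
    simp only [hk, htup]


/-! ### Good sets and the step lemma -/

/-- The premise of a task. -/
noncomputable def pre : Task → Fm ℕ
  | .fneg A => Fm.neg (Fm.neg A)
  | .timp A B => Fm.imp A B
  | .fimp A B => Fm.neg (Fm.imp A B)
  | .tall x A _ => Fm.all x A
  | .fex x A _ => Fm.neg (Fm.ex x A)
  | .tex x A => Fm.ex x A
  | .fall x A => Fm.neg (Fm.all x A)
  | .tcolon t X A => Fm.just t X A
  | .fplus t s X A => Fm.neg (Fm.just (Tm.plus t s) X A)
  | .fapp s t X B _ => Fm.neg (Fm.just (Tm.app s t) X B)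
  | .fbang t X A => Fm.neg (Fm.just (Tm.bang t) X (Fm.just t X A))
  | .ctr t X A _ => Fm.neg (Fm.just t X A)
  | .exp t X A u => Fm.neg (Fm.just t (insert (Sum.inr u) X) A)
  | .ins t X A x u => Fm.neg (Fm.just t X (A.subst1 x u))
  | .genx t X A x => Fm.neg (Fm.just (Tm.gen x t) X (Fm.all x A))

/-- The side condition of a task (independent of the branch). -/
def cond : Task → Prop
  | .fapp _ _ X _ A => ∀ a ∈ A.kocc, Sum.inr a ∈ X
  | .ctr _ X _ u => Sum.inr u ∉ X
  | .exp _ X A u => Sum.inr u ∉ X ∧ u ∉ A.kocc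
  | _ => True

/-- The requirement of a task: the conclusion has been added. -/
def Req : Task → Set (Fm ℕ) → Prop
  | .fneg A, S => A ∈ S
  | .timp A B, S => Fm.neg A ∈ S ∨ B ∈ S
  | .fimp A B, S => A ∈ S ∧ Fm.neg B ∈ S
  | .tall x A u, S => A.subst1 x u ∈ S
  | .fex x A u, S => Fm.neg (A.subst1 x u) ∈ S
  | .tex x A, S => ∃ u, A.subst1 x u ∈ S
  | .fall x A, S => ∃ u, Fm.neg (A.subst1 x u) ∈ S
  | .tcolon _ _ A, S => A.univClosure ∈ S
  | .fplus t s X A, S => Fm.neg (Fm.just t X A) ∈ S ∧ Fm.neg (Fm.just s X A) ∈ S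
  | .fapp s t X B A, S => Fm.neg (Fm.just s X (A.imp B)) ∈ S ∨ Fm.neg (Fm.just t X A) ∈ S
  | .fbang t X A, S => Fm.neg (Fm.just t X A) ∈ S
  | .ctr t X A u, S => Fm.neg (Fm.just t (insert (Sum.inr u) X) A) ∈ S
  | .exp t X A _, S => Fm.neg (Fm.just t X A) ∈ S
  | .ins t X A _ _, S => Fm.neg (Fm.just t X A) ∈ S
  | .genx t X A _, S => Fm.neg (Fm.just t X A) ∈ S

theorem Req_mono {task : Task} {S S' : Set (Fm ℕ)} (h : S ⊆ S') (hr : Req task S) :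
    Req task S' := by
  cases task with
  | fneg A => exact h hr
  | timp A B => exact hr.imp (fun x => h x) (fun x => h x)
  | fimp A B => exact ⟨h hr.1, h hr.2⟩
  | tall x A u => exact h hr
  | fex x A u => exact h hr
  | tex x A => obtain ⟨u, hu⟩ := hr; exact ⟨u, h hu⟩
  | fall x A => obtain ⟨u, hu⟩ := hr; exact ⟨u, h hu⟩
  | tcolon t X A => exact h hr
  | fplus t s X A => exact ⟨h hr.1, h hr.2⟩
  | fapp s t X B A => exact hr.imp (fun x => h x) (fun x => h x)
  | fbang t X A => exact h hr
  | ctr t X A u => exact h hr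
  | exp t X A u => exact h hr
  | ins t X A x u => exact h hr
  | genx t X A x => exact h hr

/-- The well-formedness invariant on formulas appearing on the branch. -/
def OKF (F : Fm ℕ) : Prop :=
  F.Closed ∧ (Inv F ∨ ∃ t X B, F = Fm.neg (Fm.just t X B))

/-- A good (finite, open, well-formed) branch. -/
def Good (CS : Set (ℕ × Fm Empty)) (S : Set (Fm ℕ)) : Prop :=
  S.Finite ∧ ¬ ClosedTableau CS S ∧ ∀ F ∈ S, OKF F

theorem OKF.inv_of {F : Fm ℕ} (h : OKF F)
    (hne : ∀ t X B, F ≠ Fm.neg (Fm.just t X B)) : Inv F :=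
  h.2.resolve_right (by rintro ⟨t, X, B, rfl⟩; exact hne t X B rfl)

theorem exists_fresh {S : Set (Fm ℕ)} (hfin : S.Finite) :
    ∃ u : ℕ, ∀ F ∈ S, u ∉ F.kocc := by
  have hT : (⋃ F ∈ S, ((F.kocc : Finset ℕ) : Set ℕ)).Finite :=
    hfin.biUnion (fun F _ => (F.kocc).finite_toSet)
  obtain ⟨u, hu⟩ := hT.infinite_compl.nonempty
  refine ⟨u, fun F hF hk => hu ?_⟩
  exact Set.mem_biUnion hF (by exact_mod_cast hk)

theorem closed_imp_iff {K : Type} {A B : Fm K} :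
    (Fm.imp A B).Closed ↔ A.Closed ∧ B.Closed := by
  simp [Fm.Closed, Fm.fvar, Finset.union_eq_empty]

theorem closed_just_iff {K : Type} {t : Tm} {X : Finset (ℕ ⊕ K)} {A : Fm K} :
    (Fm.just t X A).Closed ↔ ∀ y : ℕ, Sum.inl y ∉ X := by
  rw [Fm.Closed, Finset.eq_empty_iff_forall_notMem]
  constructor
  · intro h y hy; exact h y (mem_fvar_just.mpr hy)
  · intro h y hy; exact h y (mem_fvar_just.mp hy)

theorem closed_just_of {K : Type} {t t' : Tm} {X : Finset (ℕ ⊕ K)} {A B : Fm K}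
    (h : (Fm.just t X A).Closed) : (Fm.just t' X B).Closed :=
  closed_just_iff.mpr (closed_just_iff.mp h)

theorem good_step1 {CS : Set (ℕ × Fm Empty)} {S : Set (Fm ℕ)} {C : Fm ℕ}
    (hG : Good CS S) (hR : TabRule S [insert C S]) (hOK : OKF C) :
    Good CS (insert C S) := by
  obtain ⟨hfin, hct, hok⟩ := hG
  refine ⟨hfin.insert _, ?_, ?_⟩
  · intro h
    refine hct (ClosedTableau.step hR ?_)
    intro S' hS'
    simp only [List.mem_singleton] at hS'
    subst hS'
    exact h
  · rintro F (rfl | hF)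
    · exact hOK
    · exact hok F hF

theorem good_step1' {CS : Set (ℕ × Fm Empty)} {S : Set (Fm ℕ)} {C1 C2 : Fm ℕ}
    (hG : Good CS S) (hR : TabRule S [insert C1 (insert C2 S)])
    (h1 : OKF C1) (h2 : OKF C2) : Good CS (insert C1 (insert C2 S)) := by
  obtain ⟨hfin, hct, hok⟩ := hG
  refine ⟨(hfin.insert _).insert _, ?_, ?_⟩
  · intro h
    refine hct (ClosedTableau.step hR ?_)
    intro S' hS'
    simp only [List.mem_singleton] at hS'
    subst hS'
    exact h
  · rintro F (rfl | rfl | hF)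
    · exact h1
    · exact h2
    · exact hok F hF

theorem good_step2 {CS : Set (ℕ × Fm Empty)} {S : Set (Fm ℕ)} {C1 C2 : Fm ℕ}
    (hG : Good CS S) (hR : TabRule S [insert C1 S, insert C2 S])
    (h1 : OKF C1) (h2 : OKF C2) :
    Good CS (insert C1 S) ∨ Good CS (insert C2 S) := by
  obtain ⟨hfin, hct, hok⟩ := hG
  by_cases hCT1 : ClosedTableau CS (insert C1 S)
  · by_cases hCT2 : ClosedTableau CS (insert C2 S)
    · exfalso
      refine hct (ClosedTableau.step hR ?_)
      intro S' hS'
      simp only [List.mem_cons, List.mem_singleton, List.not_mem_nil, or_false] at hS'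
      rcases hS' with rfl | rfl
      · exact hCT1
      · exact hCT2
    · right
      refine ⟨hfin.insert _, hCT2, ?_⟩
      rintro F (rfl | hF)
      · exact h2
      · exact hok F hF
  · left
    refine ⟨hfin.insert _, hCT1, ?_⟩
    rintro F (rfl | hF)
    · exact h1
    · exact hok F hF

theorem XPar_mono {X Y : Finset (ℕ ⊕ ℕ)} (h : X ⊆ Y) (hY : XPar Y) : XPar X :=
  fun s hs => hY s (h hs)

theorem step_exists (CS : Set (ℕ × Fm Empty)) (task : Task) (S : Set (Fm ℕ))
    (h : Good CS S) :
    ∃ S', S ⊆ S' ∧ Good CS S' ∧ ((pre task ∈ S ∧ cond task) → Req task S') := by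
  by_cases hp : pre task ∈ S ∧ cond task
  swap
  · exact ⟨S, subset_rfl, h, fun c => absurd c hp⟩
  obtain ⟨hpre, hcond⟩ := hp
  have hokP := h.2.2 _ hpre
  cases task with
  | fneg A =>
      simp only [pre] at hpre hokP
      have hInv : Inv A := hokP.inv_of (by intro t X B hh; simp at hh)
      refine ⟨insert A S, Set.subset_insert _ _,
        good_step1 h (TabRule.fneg hpre) ⟨hokP.1, Or.inl hInv⟩,
        fun _ => Set.mem_insert _ _⟩
  | timp A B =>
      simp only [pre] at hpre hokP
      have hInv : Inv A ∧ Inv B := hokP.inv_of (by intro t X B hh; simp at hh)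
      have hcl : A.Closed ∧ B.Closed := closed_imp_iff.mp hokP.1
      rcases good_step2 h (TabRule.timp hpre)
          ⟨hcl.1, Or.inl hInv.1⟩ ⟨hcl.2, Or.inl hInv.2⟩ with hg | hg
      · exact ⟨insert (Fm.neg A) S, Set.subset_insert _ _, hg,
          fun _ => Or.inl (Set.mem_insert _ _)⟩
      · exact ⟨insert B S, Set.subset_insert _ _, hg,
          fun _ => Or.inr (Set.mem_insert _ _)⟩
  | fimp A B =>
      simp only [pre] at hpre hokP
      have hInv : Inv A ∧ Inv B := hokP.inv_of (by intro t X B hh; simp at hh)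
      have hcl : A.Closed ∧ B.Closed := closed_imp_iff.mp hokP.1
      refine ⟨insert A (insert (Fm.neg B) S), ?_,
        good_step1' h (TabRule.fimp hpre) ⟨hcl.1, Or.inl hInv.1⟩ ⟨hcl.2, Or.inl hInv.2⟩,
        fun _ => ⟨Set.mem_insert _ _, Set.mem_insert_of_mem _ (Set.mem_insert _ _)⟩⟩
      exact (Set.subset_insert _ _).trans (Set.subset_insert _ _)
  | tall x A u =>
      simp only [pre] at hpre hokP
      have hInv : Inv A := hokP.inv_of (by intro t X B hh; simp at hh)
      refine ⟨insert (A.subst1 x u) S, Set.subset_insert _ _,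
        good_step1 h (TabRule.tall u hpre)
          ⟨closed_subst1 (fvar_all_subset hokP.1) u, Or.inl (Inv_subst1 _ _ hInv)⟩,
        fun _ => Set.mem_insert _ _⟩
  | fex x A u =>
      simp only [pre] at hpre hokP
      have hInv : Inv A := hokP.inv_of (by intro t X B hh; simp at hh)
      refine ⟨insert (Fm.neg (A.subst1 x u)) S, Set.subset_insert _ _,
        good_step1 h (TabRule.fex u hpre)
          ⟨closed_subst1 (fvar_ex_subset hokP.1) u, Or.inl (Inv_subst1 _ _ hInv)⟩,
        fun _ => Set.mem_insert _ _⟩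
  | tex x A =>
      simp only [pre] at hpre hokP
      have hInv : Inv A := hokP.inv_of (by intro t X B hh; simp at hh)
      obtain ⟨u, hu⟩ := exists_fresh h.1
      refine ⟨insert (A.subst1 x u) S, Set.subset_insert _ _,
        good_step1 h (TabRule.tex u hpre hu)
          ⟨closed_subst1 (fvar_ex_subset hokP.1) u, Or.inl (Inv_subst1 _ _ hInv)⟩,
        fun _ => ⟨u, Set.mem_insert _ _⟩⟩
  | fall x A =>
      simp only [pre] at hpre hokP
      have hInv : Inv A := hokP.inv_of (by intro t X B hh; simp at hh)
      obtain ⟨u, hu⟩ := exists_fresh h.1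
      refine ⟨insert (Fm.neg (A.subst1 x u)) S, Set.subset_insert _ _,
        good_step1 h (TabRule.fall u hpre hu)
          ⟨closed_subst1 (fvar_all_subset hokP.1) u, Or.inl (Inv_subst1 _ _ hInv)⟩,
        fun _ => ⟨u, Set.mem_insert _ _⟩⟩
  | tcolon t X A =>
      simp only [pre] at hpre hokP
      have hXP : XPar X := XPar_of_closed hokP.1
      have hInv : Inv (Fm.just t X A) := hokP.inv_of (by intro t' X' B hh; simp at hh)
      refine ⟨insert A.univClosure S, Set.subset_insert _ _,
        good_step1 h (TabRule.tcolon hpre hXP)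
          ⟨closed_univClosure A, Or.inl (Inv_univClosure hInv.1)⟩,
        fun _ => Set.mem_insert _ _⟩
  | fplus t s X A =>
      simp only [pre] at hpre hokP
      have hcl := Closed_neg_iff.mp hokP.1
      have hXP : XPar X := XPar_of_closed hcl
      refine ⟨insert (Fm.neg (Fm.just t X A)) (insert (Fm.neg (Fm.just s X A)) S), ?_,
        good_step1' h (TabRule.fplus hpre hXP)
          ⟨closed_just_of (t' := t) (B := A) hcl, Or.inr ⟨_, _, _, rfl⟩⟩
          ⟨closed_just_of (t' := s) (B := A) hcl, Or.inr ⟨_, _, _, rfl⟩⟩,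
        fun _ => ⟨Set.mem_insert _ _, Set.mem_insert_of_mem _ (Set.mem_insert _ _)⟩⟩
      exact (Set.subset_insert _ _).trans (Set.subset_insert _ _)
  | fapp s t X B A =>
      simp only [pre] at hpre hokP
      simp only [cond] at hcond
      have hcl := Closed_neg_iff.mp hokP.1
      have hXP : XPar X := XPar_of_closed hcl
      rcases good_step2 h (TabRule.fapp A hpre hXP hcond)
          ⟨closed_just_of (t' := s) (B := A.imp B) hcl, Or.inr ⟨_, _, _, rfl⟩⟩
          ⟨closed_just_of (t' := t) (B := A) hcl, Or.inr ⟨_, _, _, rfl⟩⟩ with hg | hg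
      · exact ⟨_, Set.subset_insert _ _, hg, fun _ => Or.inl (Set.mem_insert _ _)⟩
      · exact ⟨_, Set.subset_insert _ _, hg, fun _ => Or.inr (Set.mem_insert _ _)⟩
  | fbang t X A =>
      simp only [pre] at hpre hokP
      have hcl := Closed_neg_iff.mp hokP.1
      have hXP : XPar X := XPar_of_closed hcl
      refine ⟨insert (Fm.neg (Fm.just t X A)) S, Set.subset_insert _ _,
        good_step1 h (TabRule.fbang hpre hXP)
          ⟨closed_just_of (t' := t) (B := A) (closed_just_of (t' := t) (B := A) hcl), Or.inr ⟨_, _, _, rfl⟩⟩,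
        fun _ => Set.mem_insert _ _⟩
  | ctr t X A u =>
      simp only [pre] at hpre hokP
      simp only [cond] at hcond
      have hcl := Closed_neg_iff.mp hokP.1
      have hXP : XPar X := XPar_of_closed hcl
      have hcl' : (Fm.just t (insert (Sum.inr u) X) A).Closed := by
        rw [closed_just_iff]
        intro y hy
        rcases Finset.mem_insert.mp hy with hy | hy
        · exact absurd hy (by simp)
        · exact closed_just_iff.mp hcl y hy
      refine ⟨insert (Fm.neg (Fm.just t (insert (Sum.inr u) X) A)) S, Set.subset_insert _ _,
        good_step1 h (TabRule.ctr u hpre hXP hcond)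
          ⟨hcl', Or.inr ⟨_, _, _, rfl⟩⟩,
        fun _ => Set.mem_insert _ _⟩
  | exp t X A u =>
      simp only [pre] at hpre hokP
      simp only [cond] at hcond
      have hcl := Closed_neg_iff.mp hokP.1
      have hXP : XPar X := XPar_mono (Finset.subset_insert _ _) (XPar_of_closed hcl)
      have hcl' : (Fm.just t X A).Closed := by
        rw [closed_just_iff]
        intro y hy
        exact closed_just_iff.mp hcl y (Finset.mem_insert_of_mem hy)
      refine ⟨insert (Fm.neg (Fm.just t X A)) S, Set.subset_insert _ _,
        good_step1 h (TabRule.exp u hpre hXP hcond.1 hcond.2)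
          ⟨hcl', Or.inr ⟨_, _, _, rfl⟩⟩,
        fun _ => Set.mem_insert _ _⟩
  | ins t X A x u =>
      simp only [pre] at hpre hokP
      have hcl := Closed_neg_iff.mp hokP.1
      have hXP : XPar X := XPar_of_closed hcl
      refine ⟨insert (Fm.neg (Fm.just t X A)) S, Set.subset_insert _ _,
        good_step1 h (TabRule.ins x u hpre hXP)
          ⟨closed_just_of (t' := t) (B := A) hcl, Or.inr ⟨_, _, _, rfl⟩⟩,
        fun _ => Set.mem_insert _ _⟩
  | genx t X A x =>
      simp only [pre] at hpre hokP
      have hcl := Closed_neg_iff.mp hokP.1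
      have hXP : XPar X := XPar_of_closed hcl
      refine ⟨insert (Fm.neg (Fm.just t X A)) S, Set.subset_insert _ _,
        good_step1 h (TabRule.genx hpre hXP)
          ⟨closed_just_of (t' := t) (B := A) hcl, Or.inr ⟨_, _, _, rfl⟩⟩,
        fun _ => Set.mem_insert _ _⟩


/-! ### The saturated branch -/

theorem exists_saturated (CS : Set (ℕ × Fm Empty)) (S0 : Set (Fm ℕ)) (h0 : Good CS S0) :
    ∃ Γ : Set (Fm ℕ), S0 ⊆ Γ ∧ (∀ F ∈ Γ, OKF F) ∧
      (∀ A : Fm ℕ, ¬(A ∈ Γ ∧ Fm.neg A ∈ Γ)) ∧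
      (∀ c A, (c, A) ∈ CS → Fm.neg (Fm.just (Tm.jconst c) ∅ (toK A)) ∉ Γ) ∧
      (∀ task : Task, pre task ∈ Γ → cond task → Req task Γ) := by
  obtain ⟨g, hg⟩ := exists_fair_enum
  let ext : Task → {S : Set (Fm ℕ) // Good CS S} → {S : Set (Fm ℕ) // Good CS S} :=
    fun task S => ⟨(step_exists CS task S.1 S.2).choose,
      (step_exists CS task S.1 S.2).choose_spec.2.1⟩
  have hext1 : ∀ task S, S.1 ⊆ (ext task S).1 :=
    fun task S => (step_exists CS task S.1 S.2).choose_spec.1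
  have hext2 : ∀ task S, (pre task ∈ S.1 ∧ cond task) → Req task (ext task S).1 :=
    fun task S h => (step_exists CS task S.1 S.2).choose_spec.2.2 h
  let ch : ℕ → {S : Set (Fm ℕ) // Good CS S} :=
    fun n => Nat.rec ⟨S0, h0⟩ (fun n ih => ext (g n) ih) n
  have hch_succ : ∀ n, ch (n + 1) = ext (g n) (ch n) := fun n => rfl
  have hch_mono : ∀ m n, m ≤ n → (ch m).1 ⊆ (ch n).1 := by
    intro m n hmn
    induction n with
    | zero => cases Nat.le_zero.mp hmn; exact subset_rfl
    | succ n ih =>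
        rcases Nat.lt_or_ge m (n + 1) with hlt | hge
        · exact (ih (Nat.lt_succ_iff.mp hlt)).trans (hext1 (g n) (ch n))
        · cases Nat.le_antisymm hmn hge
          exact subset_rfl
  refine ⟨⋃ n, (ch n).1, ?_, ?_, ?_, ?_, ?_⟩
  · exact Set.subset_iUnion (fun n => (ch n).1) 0
  · rintro F hF
    obtain ⟨n, hn⟩ := Set.mem_iUnion.mp hF
    exact (ch n).2.2.2 F hn
  · rintro A ⟨h1, h2⟩
    obtain ⟨n1, hn1⟩ := Set.mem_iUnion.mp h1
    obtain ⟨n2, hn2⟩ := Set.mem_iUnion.mp h2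
    have hA : A ∈ (ch (max n1 n2)).1 := hch_mono _ _ (le_max_left _ _) hn1
    have hnA : Fm.neg A ∈ (ch (max n1 n2)).1 := hch_mono _ _ (le_max_right _ _) hn2
    exact (ch (max n1 n2)).2.2.1 (ClosedTableau.close hA hnA)
  · rintro c A hcA hmem
    obtain ⟨n, hn⟩ := Set.mem_iUnion.mp hmem
    exact (ch n).2.2.1 (ClosedTableau.closeCS hcA hn)
  · intro task hpre hcond
    obtain ⟨m, hm⟩ := Set.mem_iUnion.mp hpre
    obtain ⟨n, hmn, hgn⟩ := hg task m
    have hpre' : pre task ∈ (ch n).1 := hch_mono _ _ hmn hm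
    have := hext2 (g n) (ch n) (by rw [hgn]; exact ⟨hpre', hcond⟩)
    rw [hgn] at this
    have h2 : ch (n + 1) = ext task (ch n) := by rw [hch_succ, hgn]
    rw [← h2] at this
    exact Req_mono (Set.subset_iUnion (fun k => (ch k).1) (n + 1)) this


/-! ### Closure of the saturated branch under annotation changes -/

section Star

variable {CS : Set (ℕ × Fm Empty)} {Γ : Set (Fm ℕ)}
variable (hsat : ∀ task : Task, pre task ∈ Γ → cond task → Req task Γ)

theorem XPar_image_inr (Z : Finset ℕ) : XPar (Z.image Sum.inr) := by
  intro s hs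
  obtain ⟨a, _, rfl⟩ := mem_image_any.mp hs
  exact ⟨a, rfl⟩

include hsat

theorem ctr_star (t : Tm) (A : Fm ℕ) (Y : Finset (ℕ ⊕ ℕ)) :
    ∀ X : Finset (ℕ ⊕ ℕ), X ⊆ Y → XPar Y →
      Fm.neg (Fm.just t X A) ∈ Γ → Fm.neg (Fm.just t Y A) ∈ Γ := by
  suffices H : ∀ (n : ℕ) (X : Finset (ℕ ⊕ ℕ)), (Y \ X).card = n → X ⊆ Y → XPar Y →
      Fm.neg (Fm.just t X A) ∈ Γ → Fm.neg (Fm.just t Y A) ∈ Γ by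
    exact fun X hXY hY h => H _ X rfl hXY hY h
  intro n
  induction n using Nat.strong_induction_on with
  | _ n ih =>
    intro X hcard hXY hYpar h
    rcases Finset.eq_empty_or_nonempty (Y \ X) with he | hne
    · have hYX : Y = X := Finset.Subset.antisymm
        (fun a ha => by
          by_contra hax
          exact (Finset.eq_empty_iff_forall_notMem.mp he a) (Finset.mem_sdiff.mpr ⟨ha, hax⟩))
        hXY
      rwa [hYX]
    · obtain ⟨a, ha⟩ := hne
      have haY := (Finset.mem_sdiff.mp ha).1
      have haX := (Finset.mem_sdiff.mp ha).2
      obtain ⟨u, rfl⟩ := hYpar a haY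
      have hreq : Fm.neg (Fm.just t (insert (Sum.inr u) X) A) ∈ Γ :=
        hsat (Task.ctr t X A u) h haX
      have hset : Y \ insert (Sum.inr u) X = (Y \ X).erase (Sum.inr u) := by
        ext b
        simp only [Finset.mem_sdiff, Finset.mem_erase, Finset.mem_insert]
        tauto
      refine ih ((Y \ insert (Sum.inr u) X).card) ?_ _ rfl
        (Finset.insert_subset haY hXY) hYpar hreq
      rw [hset, ← hcard]
      exact Finset.card_erase_lt_of_mem ha

theorem exp_star (t : Tm) (A : Fm ℕ) (Y : Finset (ℕ ⊕ ℕ)) :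
    ∀ X : Finset (ℕ ⊕ ℕ), Y ⊆ X → XPar X →
      (∀ u : ℕ, Sum.inr u ∈ X → Sum.inr u ∉ Y → u ∉ A.kocc) →
      Fm.neg (Fm.just t X A) ∈ Γ → Fm.neg (Fm.just t Y A) ∈ Γ := by
  suffices H : ∀ (n : ℕ) (X : Finset (ℕ ⊕ ℕ)), (X \ Y).card = n → Y ⊆ X → XPar X →
      (∀ u : ℕ, Sum.inr u ∈ X → Sum.inr u ∉ Y → u ∉ A.kocc) →
      Fm.neg (Fm.just t X A) ∈ Γ → Fm.neg (Fm.just t Y A) ∈ Γ by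
    exact fun X h1 h2 h3 h4 => H _ X rfl h1 h2 h3 h4
  intro n
  induction n using Nat.strong_induction_on with
  | _ n ih =>
    intro X hcard hYX hXpar hkocc h
    rcases Finset.eq_empty_or_nonempty (X \ Y) with he | hne
    · have hXY : X = Y := Finset.Subset.antisymm
        (fun a ha => by
          by_contra hax
          exact (Finset.eq_empty_iff_forall_notMem.mp he a) (Finset.mem_sdiff.mpr ⟨ha, hax⟩))
        hYX
      rwa [hXY] at h
    · obtain ⟨a, ha⟩ := hne
      have haX := (Finset.mem_sdiff.mp ha).1
      have haY := (Finset.mem_sdiff.mp ha).2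
      obtain ⟨u, rfl⟩ := hXpar a haX
      have hu : u ∉ A.kocc := hkocc u haX haY
      have hXeq : insert (Sum.inr u) (X.erase (Sum.inr u)) = X := Finset.insert_erase haX
      have hpre' : Fm.neg (Fm.just t (insert (Sum.inr u) (X.erase (Sum.inr u))) A) ∈ Γ := by
        rwa [hXeq]
      have hreq : Fm.neg (Fm.just t (X.erase (Sum.inr u)) A) ∈ Γ :=
        hsat (Task.exp t (X.erase (Sum.inr u)) A u) hpre'
          ⟨Finset.notMem_erase _ _, hu⟩
      refine ih ((X.erase (Sum.inr u) \ Y).card) ?_ _ rfl ?_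
        (XPar_mono (Finset.erase_subset _ _) hXpar)
        (fun v hv hvY => hkocc v (Finset.mem_of_mem_erase hv) hvY) hreq
      · have hset : X.erase (Sum.inr u) \ Y = (X \ Y).erase (Sum.inr u) := by
          ext b
          simp only [Finset.mem_sdiff, Finset.mem_erase]
          tauto
        rw [hset, ← hcard]
        exact Finset.card_erase_lt_of_mem ha
      · intro b hb
        exact Finset.mem_erase.mpr ⟨fun hbu => haY (hbu ▸ hb), hYX hb⟩

/-- From an arbitrary parameter annotation down to exactly `Par(A)`. -/
theorem to_par {t : Tm} {A : Fm ℕ} {X : Finset (ℕ ⊕ ℕ)} (hX : XPar X)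
    (h : Fm.neg (Fm.just t X A) ∈ Γ) :
    Fm.neg (Fm.just t (A.kocc.image Sum.inr) A) ∈ Γ := by
  have himg : XPar (A.kocc.image Sum.inr) := XPar_image_inr _
  have hup : Fm.neg (Fm.just t (X ∪ A.kocc.image Sum.inr) A) ∈ Γ := by
    refine ctr_star hsat t A _ X Finset.subset_union_left ?_ h
    intro s hs
    rcases Finset.mem_union.mp hs with hs | hs
    · exact hX s hs
    · exact himg s hs
  refine exp_star hsat t A _ _ Finset.subset_union_right ?_ ?_ hup
  · intro s hs
    rcases Finset.mem_union.mp hs with hs | hs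
    · exact hX s hs
    · exact himg s hs
  · intro u _ huY hk
    exact huY (Finset.mem_image_of_mem _ hk)

/-- From exactly `Par(A)` up to any parameter annotation containing `Par(A)`. -/
theorem par_up {t : Tm} {A : Fm ℕ} {X : Finset (ℕ ⊕ ℕ)} (hX : XPar X)
    (hsub : ∀ a ∈ A.kocc, Sum.inr a ∈ X)
    (h : Fm.neg (Fm.just t (A.kocc.image Sum.inr) A) ∈ Γ) :
    Fm.neg (Fm.just t X A) ∈ Γ := by
  refine ctr_star hsat t A X _ ?_ hX h
  intro s hs
  obtain ⟨a, ha, rfl⟩ := mem_image_any.mp hs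
  exact hsub a ha

end Star


/-! ### The canonical model and the truth lemma -/

theorem image_inst_irrel {α β : Type*} {inst inst' : DecidableEq β} (f : α → β) (s : Finset α) :
    @Finset.image α β inst f s = @Finset.image α β inst' f s := by
  have h : inst = inst' := Subsingleton.elim _ _
  subst h
  rfl

theorem union_inst_irrel {α : Type*} {i i' : DecidableEq α} (s t : Finset α) :
    @Union.union _ (@Finset.instUnion α i) s t = @Union.union _ (@Finset.instUnion α i') s t := by
  have h : i = i' := Subsingleton.elim _ _
  subst h
  rfl

theorem mem_canE_iff {Γ : Set (Fm ℕ)} {t : Tm} {A : Fm ℕ} :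
    A ∈ canE Γ t ↔ Fm.neg (Fm.just t (A.kocc.image Sum.inr) A) ∉ Γ := Iff.rfl

theorem args_inr {args : List (ℕ ⊕ ℕ)} (h : args.filterMap Sum.getLeft? = []) :
    ∃ as : List ℕ, args = as.map Sum.inr := by
  induction args with
  | nil => exact ⟨[], rfl⟩
  | cons a args ih =>
      cases a with
      | inl x => simp [List.filterMap_cons, Sum.getLeft?] at h
      | inr b =>
          rw [List.filterMap_cons] at h
          simp only [Sum.getLeft?] at h
          obtain ⟨as, rfl⟩ := ih h
          exact ⟨b :: as, rfl⟩

theorem closed_pred_inr {Q : ℕ} {args : List (ℕ ⊕ ℕ)} (h : (Fm.pred Q args).Closed) :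
    ∃ as : List ℕ, args = as.map Sum.inr := by
  apply args_inr
  have h' : (args.filterMap Sum.getLeft?).toFinset = ∅ := h
  rwa [List.toFinset_eq_empty_iff] at h'

theorem exists_model (CS : Set (ℕ × Fm Empty)) (Γ : Set (Fm ℕ))
    (hOK : ∀ F ∈ Γ, OKF F)
    (hpair : ∀ A : Fm ℕ, ¬(A ∈ Γ ∧ Fm.neg A ∈ Γ))
    (hcs : ∀ c A, (c, A) ∈ CS → Fm.neg (Fm.just (Tm.jconst c) ∅ (toK A)) ∉ Γ)
    (hsat : ∀ task : Task, pre task ∈ Γ → cond task → Req task Γ) :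
    ∃ M : MModel CS ℕ, ∀ F : Fm ℕ, (F ∈ Γ → M.Sat F) ∧ (Fm.neg F ∈ Γ → ¬ M.Sat F) := by
  refine ⟨⟨⟨0⟩, canI Γ, canE Γ, ?_, ?_, ?_, ?_, ?_, ?_⟩, ?_⟩
  · -- e1
    intro c A hcA
    rw [mem_canE_iff, kocc_toK, Finset.image_empty]
    exact hcs c A hcA
  · -- e2
    intro s t A B hAB hA
    by_contra hB
    rw [mem_canE_iff, not_not] at hB
    set X : Finset (ℕ ⊕ ℕ) := (Fm.imp A B).kocc.image Sum.inr with hXdef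
    have hXP : XPar X := XPar_image_inr _
    have hkimp : (Fm.imp A B).kocc = A.kocc ∪ B.kocc := by simp only [Fm.kocc]; exact union_inst_irrel _ _
    have h1 : Fm.neg (Fm.just (Tm.app s t) X B) ∈ Γ := by
      refine ctr_star hsat _ _ _ _ ?_ hXP hB
      intro z hz
      obtain ⟨a, ha, rfl⟩ := mem_image_any.mp hz
      refine mem_image_any.mpr ⟨a, ?_, rfl⟩
      rw [hkimp]
      exact Finset.mem_union_right _ ha
    have hcondX : ∀ a ∈ A.kocc, Sum.inr a ∈ X := by
      intro a ha
      refine mem_image_any.mpr ⟨a, ?_, rfl⟩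
      rw [hkimp]
      exact Finset.mem_union_left _ ha
    rcases hsat (Task.fapp s t X B A) h1 hcondX with h2 | h2
    · exact hAB h2
    · refine hA (exp_star hsat t A _ X ?_ hXP ?_ h2)
      · intro z hz
        obtain ⟨a, ha, rfl⟩ := mem_image_any.mp hz
        exact hcondX a ha
      · intro u _ huY hk
        exact huY (mem_image_any.mpr ⟨u, hk, rfl⟩)
  · -- e3
    intro s t A hA
    rw [Set.mem_union] at hA
    rw [mem_canE_iff]
    intro h
    have hreq := hsat (Task.fplus s t (A.kocc.image Sum.inr) A) h trivial
    rcases hA with hA | hA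
    · exact hA hreq.1
    · exact hA hreq.2
  · -- e4
    intro t A X hA hsub
    suffices hgoal : Fm.just t (X.image Sum.inr) A ∈ canE Γ (Tm.bang t) by
      convert hgoal using 3
    have hBk : (Fm.just t (X.image Sum.inr) A).kocc = X := by
      ext a
      rw [mem_kocc_just]
      constructor
      · rintro (ha | ha)
        · exact hsub ha
        · obtain ⟨b, hb, heq⟩ := mem_image_any.mp ha
          cases heq
          exact hb
      · intro ha
        exact Or.inr (mem_image_any.mpr ⟨a, ha, rfl⟩)
    rw [mem_canE_iff, hBk]
    intro h
    have hreq : Fm.neg (Fm.just t (X.image Sum.inr) A) ∈ Γ :=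
      hsat (Task.fbang t (X.image Sum.inr) A) h trivial
    refine hA (exp_star hsat t A _ _ ?_ (XPar_image_inr _) ?_ hreq)
    · intro z hz
      obtain ⟨a, ha, rfl⟩ := mem_image_any.mp hz
      exact mem_image_any.mpr ⟨a, hsub ha, rfl⟩
    · intro u _ huY hk
      exact huY (mem_image_any.mpr ⟨u, hk, rfl⟩)
  · -- e5
    intro t x A hA
    have hk : (Fm.all x A).kocc = A.kocc := by simp only [Fm.kocc]
    rw [mem_canE_iff, hk]
    intro h
    exact hA (hsat (Task.genx t (A.kocc.image Sum.inr) A x) h trivial)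
  · -- e6
    intro t A x a hA
    rw [mem_canE_iff]
    intro h
    have hreq : Fm.neg (Fm.just t ((A.subst1 x a).kocc.image Sum.inr) A) ∈ Γ :=
      hsat (Task.ins t ((A.subst1 x a).kocc.image Sum.inr) A x a) h trivial
    refine hA (exp_star hsat t A _ _ ?_ (XPar_image_inr _) ?_ hreq)
    · intro z hz
      obtain ⟨b, hb, rfl⟩ := mem_image_any.mp hz
      exact mem_image_any.mpr ⟨b, kocc_subset_msubst _ _ hb, rfl⟩
    · intro u _ huY hk
      exact huY (mem_image_any.mpr ⟨u, hk, rfl⟩)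
  · -- truth lemma
    suffices H : ∀ (n : ℕ) (F : Fm ℕ), F.size < n →
        (F ∈ Γ → MModel.Sat _ F) ∧ (Fm.neg F ∈ Γ → ¬ MModel.Sat _ F) from
      fun F => H (F.size + 1) F (Nat.lt_succ_self _)
    intro n
    induction n with
    | zero => intro F h; exact absurd h (Nat.not_lt_zero _)
    | succ n ih =>
      intro F hsize
      cases F with
      | pred Q args =>
          constructor
          · intro hmem
            rw [sat_pred]
            obtain ⟨as, rfl⟩ := closed_pred_inr (hOK _ hmem).1
            exact ⟨as, rfl, hmem⟩
          · intro hmem hsat'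
            rw [sat_pred] at hsat'
            obtain ⟨as, rfl, hI⟩ := hsat'
            exact hpair _ ⟨hI, hmem⟩
      | neg G =>
          have hsG : G.size < n := by simp only [Fm.size] at hsize; omega
          have ihG := ih G hsG
          constructor
          · intro hmem
            rw [sat_neg]
            exact ihG.2 hmem
          · intro hmem
            have hG : G ∈ Γ := hsat (Task.fneg G) hmem trivial
            rw [sat_neg]
            exact not_not_intro (ihG.1 hG)
      | imp A B =>
          have ihA := ih A (by simp only [Fm.size] at hsize; omega)
          have ihB := ih B (by simp only [Fm.size] at hsize; omega)
          constructor
          · intro hmem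
            rw [sat_imp]
            rcases hsat (Task.timp A B) hmem trivial with h | h
            · intro hA; exact absurd hA (ihA.2 h)
            · intro _; exact ihB.1 h
          · intro hmem
            have hq := hsat (Task.fimp A B) hmem trivial
            rw [sat_imp]
            intro hcon
            exact (ihB.2 hq.2) (hcon (ihA.1 hq.1))
      | all x A =>
          have hsA : ∀ u : ℕ, (A.subst1 x u).size < n := by
            intro u
            have := Fm.size_subst1_le x u A
            simp only [Fm.size] at hsize
            omega
          constructor
          · intro hmem
            rw [sat_all]
            intro a
            exact (ih (A.subst1 x a) (hsA a)).1 (hsat (Task.tall x A a) hmem trivial)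
          · intro hmem
            obtain ⟨u, hu⟩ := hsat (Task.fall x A) hmem trivial
            rw [sat_all]
            intro hcon
            exact (ih (A.subst1 x u) (hsA u)).2 hu (hcon u)
      | ex x A =>
          have hsA : ∀ u : ℕ, (A.subst1 x u).size < n := by
            intro u
            have := Fm.size_subst1_le x u A
            simp only [Fm.size] at hsize
            omega
          constructor
          · intro hmem
            rw [sat_ex]
            obtain ⟨u, hu⟩ := hsat (Task.tex x A) hmem trivial
            exact ⟨u, (ih (A.subst1 x u) (hsA u)).1 hu⟩
          · intro hmem
            rw [sat_ex]
            rintro ⟨u, hu⟩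
            exact (ih (A.subst1 x u) (hsA u)).2 (hsat (Task.fex x A u) hmem trivial) hu
      | just t X A =>
          constructor
          · intro hmem
            rw [sat_just]
            have hXP : XPar X := XPar_of_closed (hOK _ hmem).1
            have hInvJ : Inv (Fm.just t X A) :=
              (hOK _ hmem).inv_of (by intro t' X' B hh; simp at hh)
            have hInv : Inv A ∧ ∀ a ∈ A.kocc, Sum.inr a ∈ X := hInvJ
            constructor
            · by_contra hA
              rw [mem_canE_iff, not_not] at hA
              exact hpair _ ⟨hmem, par_up hsat hXP hInv.2 hA⟩
            · have h' := hsat (Task.tcolon t X A) hmem trivial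
              have hsU : A.univClosure.size < n := by
                rw [Fm.size_univClosure]
                simp only [Fm.size] at hsize
                omega
              exact (ih A.univClosure hsU).1 h'
          · intro hmem
            rw [sat_just]
            have hXP : XPar X := XPar_of_closed (Closed_neg_iff.mp ((hOK _ hmem).1))
            rintro ⟨hE, -⟩
            exact hE (to_par hsat hXP hmem)


theorem main_good_init {CS : Set (ℕ × Fm Empty)} {A : Fm Empty} (hA : A.Closed)
    (hct : ¬ ClosedTableau CS {Fm.neg (toK A)}) : Good CS {Fm.neg (toK A)} := by
  refine ⟨Set.finite_singleton _, hct, ?_⟩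
  intro F hF
  rw [Set.mem_singleton_iff] at hF
  subst hF
  constructor
  · rw [Closed_neg_iff, Fm.Closed, fvar_toK]
    exact hA
  · left
    show Inv (Fm.neg (toK A))
    have : Inv (toK A) := Inv_toK A
    exact this

end Completeness
/-- Completeness of the tableau system.  If a sentence `A` is
`FOLP_CS`-valid then `A` has an `FOLP_CS`-tableau proof. -/
theorem tableau_completeness
    (CS : Set (ℕ × Fm Empty)) (hCS : ConstantSpec CS)
    (A : Fm Empty) (hA : A.Closed)
    (hvalid : FOLPValid CS A) :
    TabProof CS A := by
  by_contra hnp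
  have hct : ¬ ClosedTableau CS {Fm.neg (toK A)} := hnp
  obtain ⟨Γ, hsub, hOK, hpair, hcs, hsat⟩ :=
    Completeness.exists_saturated CS _ (Completeness.main_good_init hA hct)
  obtain ⟨M, hM⟩ := Completeness.exists_model CS Γ hOK hpair hcs hsat
  have h1 : Fm.neg (toK A) ∈ Γ := hsub rfl
  exact (hM (toK A)).2 h1 (hvalid ℕ M)
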